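/- arXiv:2211.03903 — 5 statements merged into one kernel-verified Lean document; each statement's English description precedes it below -/
import Mathlib

section
/- The function w ↦ ρ_α(w) + w²/(2α) is convex on ℝ; i.e., the scaled MCP is semiconvex with semiconvexity modulus 1/α. -/
/-- Scaled minimax concave penalty. -/
noncomputable def mcp (α w : ℝ) : ℝ :=
  if |w| ≤ α then |w| - w ^ 2 / (2 * α) else α / 2

/-!
On `|w| ≤ α` the added quadratic cancels the one in the penalty, leaving `|w|`; beyond `α`,
completing the square gives `|w| + (|w| - α) ^ 2 / (2 * α)`. Hence the function is `|w|` plus a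
positive multiple of the square of the convex nonnegative function `max (|w| - α) 0`.
-/

open Set

lemma mcp_add_sq_div_eq {α : ℝ} (hα : α ≠ 0) (w : ℝ) :
    mcp α w + w ^ 2 / (2 * α) = |w| + max (|w| - α) 0 ^ 2 / (2 * α) := by
  unfold mcp
  split_ifs with h
  · rw [max_eq_right (by linarith)]
    ring
  · rw [max_eq_left (by linarith), sub_sq, sq_abs]
    field_simp
    ring

lemma convexOn_max_abs_sub_sq (α : ℝ) :
    ConvexOn ℝ univ (fun w : ℝ => max (|w| - α) 0 ^ 2) :=
  (((convexOn_univ_norm (E := ℝ)).sub (concaveOn_const α convex_univ)).sup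
    (convexOn_const 0 convex_univ)).pow (fun _ _ => le_max_right _ _) 2

theorem mcp_semiconvex (α : ℝ) (hα : 0 < α) :
    ConvexOn ℝ Set.univ (fun w : ℝ => mcp α w + w ^ 2 / (2 * α)) := by
  simp_rw [mcp_add_sq_div_eq hα.ne', div_eq_inv_mul]
  exact (convexOn_univ_norm (E := ℝ)).add
    ((convexOn_max_abs_sub_sq α).smul (by positivity : (0 : ℝ) ≤ (2 * α)⁻¹))
end

section
/- Let 0 < β < α and r ∈ ℝ. Then the minimizer of w ↦ (1/(2β))(r − w)² + ρ_α(w) over ℝ is unique and given by the firm thresholding operator: 0 if |r| ≤ β; (α/(α−β))(1 − β/|r|)·r if β < |r| ≤ α; and r if |r| > α. -/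
/-- Firm thresholding operator with parameters `β < α`. -/
noncomputable def firm (α β r : ℝ) : ℝ :=
  if |r| ≤ β then 0
  else if |r| ≤ α then (α / (α - β)) * (1 - β / |r|) * r
  else r

/-!
`mcp α` is the upper envelope of the functions `v ↦ |v| - |s| - (v - s)² / (2α)`, and the
envelope is attained at `s = 0` when `|v| ≤ α` and at `s = v - α · sign v` otherwise. Adding
`(r - v)² / (2β)` to one of these minorants gives a strictly convex function because `β < α`,
so a point satisfying its first-order condition `0 ∈ (t - r)/β - (t - s)/α + ∂|·|(t)` is its
unique minimizer. In each regime of the firm thresholding operator, `t = firm α β r` satisfies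
this condition for a minorant touching `mcp α` at `t`, hence it is also the unique minimizer of
the prox objective.
-/

noncomputable def mcpMinorant (α s v : ℝ) : ℝ :=
  |v| - |s| - (v - s) ^ 2 / (2 * α)

noncomputable def proxObjective (α β r w : ℝ) : ℝ :=
  1 / (2 * β) * (r - w) ^ 2 + mcp α w

lemma mcpMinorant_zero_of_abs_le {α v : ℝ} (hv : |v| ≤ α) : mcpMinorant α 0 v = mcp α v := by
  simp [mcpMinorant, mcp, hv]

lemma mcpMinorant_le_mcp {α : ℝ} (hα : 0 < α) (s v : ℝ) : mcpMinorant α s v ≤ mcp α v := by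
  unfold mcpMinorant mcp
  split_ifs with hv
  · have hvs : v * s ≤ |v| * |s| := (le_abs_self _).trans (abs_mul v s).le
    have hs : 0 ≤ |s| := abs_nonneg s
    rw [sub_sub, sub_le_sub_iff_left, ← sub_nonneg]
    have : |s| + (v - s) ^ 2 / (2 * α) - v ^ 2 / (2 * α) =
        (2 * α * |s| - 2 * v * s + s ^ 2) / (2 * α) := by
      field_simp; ring
    rw [this]
    apply div_nonneg _ (by positivity)
    nlinarith [mul_nonneg (sub_nonneg.mpr hv) hs, sq_nonneg s]
  · have htri : |v| - |s| ≤ |v - s| := abs_sub_abs_le_abs_sub v s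
    have hsq : (v - s) ^ 2 / (2 * α) = |v - s| ^ 2 / (2 * α) := by rw [sq_abs]
    rw [hsq]
    have : |v - s| - |v - s| ^ 2 / (2 * α) ≤ α / 2 := by
      rw [← sub_nonneg]
      have : α / 2 - (|v - s| - |v - s| ^ 2 / (2 * α)) = (|v - s| - α) ^ 2 / (2 * α) := by
        field_simp; ring
      rw [this]; positivity
    linarith

section StrictMin

variable {α β : ℝ} (hβ : 0 < β) (hβα : β < α)
include hβ hβα

/-- `hσ`, `hσt` say `σ ∈ ∂|·|(t)`, and `hstat` is the first-order condition multiplied by `αβ`. -/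
lemma sq_add_mcpMinorant_lt {r s t σ : ℝ} (hσ : |σ| ≤ 1) (hσt : σ * t = |t|)
    (hstat : α * (t - r) - β * (t - s) + α * β * σ = 0) {v : ℝ} (hv : v ≠ t) :
    1 / (2 * β) * (r - t) ^ 2 + mcpMinorant α s t <
      1 / (2 * β) * (r - v) ^ 2 + mcpMinorant α s v := by
  have hα : 0 < α := hβ.trans hβα
  have hσv : σ * v ≤ |v| :=
    calc σ * v ≤ |σ| * |v| := (le_abs_self _).trans (abs_mul σ v).le
      _ ≤ |v| := mul_le_of_le_one_left (abs_nonneg v) hσ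
  have hgap : 0 < (α - β) * (v - t) ^ 2 :=
    mul_pos (sub_pos.mpr hβα) (by positivity [sub_ne_zero.mpr hv])
  rw [← sub_pos]
  have hdiff : 1 / (2 * β) * (r - v) ^ 2 + mcpMinorant α s v -
      (1 / (2 * β) * (r - t) ^ 2 + mcpMinorant α s t) =
      ((α - β) * (v - t) ^ 2 + 2 * α * β * (|v| - σ * v)
          + 2 * (v - t) * (α * (t - r) - β * (t - s) + α * β * σ)) / (2 * α * β) := by
    unfold mcpMinorant
    rw [← hσt]
    field_simp
    ring
  rw [hdiff, hstat]
  apply div_pos _ (by positivity)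
  nlinarith [mul_pos hα hβ]

lemma proxObjective_lt_of_minorant {r s t σ : ℝ} (hσ : |σ| ≤ 1) (hσt : σ * t = |t|)
    (hstat : α * (t - r) - β * (t - s) + α * β * σ = 0) (htouch : mcpMinorant α s t = mcp α t)
    {v : ℝ} (hv : v ≠ t) : proxObjective α β r t < proxObjective α β r v := by
  have := sq_add_mcpMinorant_lt hβ hβα hσ hσt hstat hv
  have := mcpMinorant_le_mcp (hβ.trans hβα) s v
  unfold proxObjective
  linarith

lemma proxObjective_zero_lt {r v : ℝ} (hrβ : |r| ≤ β) (hv : v ≠ 0) :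
    proxObjective α β r 0 < proxObjective α β r v := by
  refine proxObjective_lt_of_minorant hβ hβα (s := 0) (σ := r / β) ?_ (by simp) ?_
    (mcpMinorant_zero_of_abs_le (by simpa using (hβ.trans hβα).le)) hv
  · rwa [abs_div, abs_of_pos hβ, div_le_one hβ]
  · field_simp; ring

lemma proxObjective_shrink_lt {r v : ℝ} (hrβ : β < |r|) (hrα : |r| ≤ α)
    (hv : v ≠ α / (α - β) * (1 - β / |r|) * r) :
    proxObjective α β r (α / (α - β) * (1 - β / |r|) * r) < proxObjective α β r v := by
  have hα : 0 < α := hβ.trans hβα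
  have hαβ : 0 < α - β := sub_pos.mpr hβα
  have hr : 0 < |r| := hβ.trans hrβ
  have hc : 0 ≤ α / (α - β) * (1 - β / |r|) :=
    mul_nonneg (div_nonneg hα.le hαβ.le) (sub_nonneg.mpr ((div_le_one hr).mpr hrβ.le))
  have habs : |α / (α - β) * (1 - β / |r|) * r| = α * (|r| - β) / (α - β) := by
    rw [abs_mul, abs_of_nonneg hc]
    field_simp
  refine proxObjective_lt_of_minorant hβ hβα (s := 0) (σ := r / |r|)
    (by rw [abs_div, abs_abs]; exact div_self_le_one _) ?_ ?_ (mcpMinorant_zero_of_abs_le ?_) hv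
  · rw [habs]
    field_simp
    rw [sq_abs]
  · field_simp; ring
  · rw [habs, div_le_iff₀ hαβ]
    nlinarith

lemma proxObjective_self_lt {r v : ℝ} (hrα : α < |r|) (hv : v ≠ r) :
    proxObjective α β r r < proxObjective α β r v := by
  have hr : 0 < |r| := (hβ.trans hβα).trans hrα
  have hs : |r - r / |r| * α| = |r| - α := by
    rw [show r - r / |r| * α = (|r| - α) / |r| * r by field_simp, abs_mul,
      abs_of_nonneg (div_nonneg (by linarith) hr.le)]
    field_simp
  refine proxObjective_lt_of_minorant hβ hβα (s := r - r / |r| * α) (σ := r / |r|)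
    (by rw [abs_div, abs_abs]; exact div_self_le_one _) ?_ (by ring) ?_ hv
  · field_simp; exact (sq_abs r).symm
  · rw [mcp, if_neg (not_le.mpr hrα), mcpMinorant, hs,
      show r - (r - r / |r| * α) = r / |r| * α by ring, mul_pow, div_pow, sq_abs,
      div_self (pow_ne_zero 2 (abs_pos.mp hr))]
    field_simp; ring

lemma proxObjective_firm_lt {r v : ℝ} (hv : v ≠ firm α β r) :
    proxObjective α β r (firm α β r) < proxObjective α β r v := by
  unfold firm at hv ⊢
  split_ifs at hv ⊢ with hrβ hrα
  · exact proxObjective_zero_lt hβ hβα hrβ hv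
  · exact proxObjective_shrink_lt hβ hβα (not_le.mp hrβ) hrα hv
  · exact proxObjective_self_lt hβ hβα (not_le.mp hrα) hv

end StrictMin

lemma setOf_forall_le_eq_singleton {X Y : Type*} [Preorder Y] {f : X → Y} {t : X}
    (ht : ∀ v ≠ t, f t < f v) :
    {w | ∀ v, f w ≤ f v} = {t} := by
  ext w
  simp only [Set.mem_ofPred_eq, Set.mem_singleton_iff]
  refine ⟨fun hw => by_contra fun hwt => (ht w hwt).not_ge (hw t), ?_⟩
  rintro rfl v
  rcases eq_or_ne v w with rfl | hv
  · exact le_rfl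
  · exact (ht v hv).le

theorem prox_mcp_firm (α β : ℝ) (hβ : 0 < β) (hβα : β < α) (r : ℝ) :
    {w : ℝ | ∀ v : ℝ, 1 / (2 * β) * (r - w) ^ 2 + mcp α w ≤
        1 / (2 * β) * (r - v) ^ 2 + mcp α v} = {firm α β r} :=
  setOf_forall_le_eq_singleton fun _ hv => proxObjective_firm_lt hβ hβα hv
end

section
/- Let β = α > 0 and r ∈ ℝ. If |r| < α then 0 is the unique minimizer of w ↦ (1/(2α))(r − w)² + ρ_α(w); if |r| > α then r is the unique minimizer; and if |r| = α then every point in [0, α]·sign(r) attains the minimum value. -/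
lemma mcp_obj (α : ℝ) (hα : 0 < α) (r v : ℝ) (h : |v| ≤ α) :
    1 / (2 * α) * (r - v) ^ 2 + mcp α v = r ^ 2 / (2 * α) + (|v| - r * v / α) := by
  rw [mcp, if_pos h]
  have h2 : (2 * α) ≠ 0 := by positivity
  have h1 : α ≠ 0 := by positivity
  field_simp
  ring

lemma mcp_obj' (α : ℝ) (r v : ℝ) (h : ¬ |v| ≤ α) :
    1 / (2 * α) * (r - v) ^ 2 + mcp α v = (r - v) ^ 2 / (2 * α) + α / 2 := by
  rw [mcp, if_neg h]; ring

theorem prox_mcp_critical (α : ℝ) (hα : 0 < α) (r : ℝ) :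
    (|r| < α → {w : ℝ | ∀ v : ℝ, 1 / (2 * α) * (r - w) ^ 2 + mcp α w ≤
        1 / (2 * α) * (r - v) ^ 2 + mcp α v} = {0}) ∧
    (|r| > α → {w : ℝ | ∀ v : ℝ, 1 / (2 * α) * (r - w) ^ 2 + mcp α w ≤
        1 / (2 * α) * (r - v) ^ 2 + mcp α v} = {r}) ∧
    (|r| = α → ∀ t ∈ Set.Icc (0 : ℝ) α, ∀ v : ℝ,
        1 / (2 * α) * (r - t * Real.sign r) ^ 2 + mcp α (t * Real.sign r) ≤
        1 / (2 * α) * (r - v) ^ 2 + mcp α v) := by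
  have hα2 : (0:ℝ) < 2 * α := by linarith
  refine ⟨?_, ?_, ?_⟩
  · -- |r| < α
    intro hr
    have hmin : ∀ v : ℝ, v ≠ 0 →
        1 / (2 * α) * (r - 0) ^ 2 + mcp α 0 < 1 / (2 * α) * (r - v) ^ 2 + mcp α v := by
      intro v hv
      have h0 : |(0:ℝ)| ≤ α := by simp [le_of_lt hα]
      rw [mcp_obj α hα r 0 h0]
      by_cases hv' : |v| ≤ α
      · rw [mcp_obj α hα r v hv']
        have h1 : r * v ≤ |r| * |v| := by
          calc r * v ≤ |r * v| := le_abs_self _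
            _ = |r| * |v| := abs_mul r v
        have h2 : |r| * |v| < α * |v| := mul_lt_mul_of_pos_right hr (abs_pos.mpr hv)
        have h3 : r * v / α < |v| := by rw [div_lt_iff₀ hα]; nlinarith
        simp only [abs_zero, mul_zero, zero_div]
        linarith
      · rw [mcp_obj' α r v hv']
        have h1 : r ^ 2 < α ^ 2 := by nlinarith [abs_nonneg r, sq_abs r]
        have h2 : r ^ 2 / (2 * α) < α / 2 := by rw [div_lt_iff₀ hα2]; nlinarith
        have h3 : 0 ≤ (r - v) ^ 2 / (2 * α) := by positivity
        simp only [abs_zero, mul_zero, zero_div]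
        linarith
    ext w
    simp only [Set.mem_setOf_eq, Set.mem_singleton_iff]
    constructor
    · intro hw
      by_contra hne
      have h1 := hw 0
      have h2 := hmin w hne
      linarith
    · intro hw; subst hw
      intro v
      rcases eq_or_ne v 0 with h | h
      · subst h; exact le_refl _
      · exact (hmin v h).le
  · -- |r| > α
    intro hr
    have hrle : ¬ |r| ≤ α := not_le.mpr hr
    have hmin : ∀ v : ℝ, v ≠ r →
        1 / (2 * α) * (r - r) ^ 2 + mcp α r < 1 / (2 * α) * (r - v) ^ 2 + mcp α v := by
      intro v hv
      rw [mcp_obj' α r r hrle]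
      by_cases hv' : |v| ≤ α
      · rw [mcp_obj α hα r v hv']
        have h1 : r * v ≤ |r| * |v| := by
          calc r * v ≤ |r * v| := le_abs_self _
            _ = |r| * |v| := abs_mul r v
        have h2 : 0 ≤ (|r| - α) * (α - |v|) :=
          mul_nonneg (by linarith) (by linarith)
        have h3 : 0 < (|r| - α) ^ 2 := pow_pos (by linarith) 2
        have hsq : |r| ^ 2 = r ^ 2 := sq_abs r
        have hgoal : α / 2 < r ^ 2 / (2 * α) + (|v| - r * v / α) := by
          rw [show r ^ 2 / (2 * α) + (|v| - r * v / α)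
              = (r ^ 2 + 2 * α * |v| - 2 * (r * v)) / (2 * α) by field_simp; ring,
            lt_div_iff₀ hα2]
          nlinarith
        simp only [sub_self]
        norm_num
        linarith
      · rw [mcp_obj' α r v hv']
        have h1 : 0 < (r - v) ^ 2 / (2 * α) := by
          have : r - v ≠ 0 := sub_ne_zero.mpr (Ne.symm hv)
          positivity
        simp only [sub_self]
        norm_num
        linarith
    ext w
    simp only [Set.mem_setOf_eq, Set.mem_singleton_iff]
    constructor
    · intro hw
      by_contra hne
      have h1 := hw r
      have h2 := hmin w hne
      linarith
    · intro hw; subst hw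
      intro v
      rcases eq_or_ne v w with h | h
      · subst h; exact le_refl _
      · exact (hmin v h).le
  · -- |r| = α
    intro hr t ht v
    have hr0 : r ≠ 0 := by
      intro h; rw [h, abs_zero] at hr; linarith
    have hs : r * Real.sign r = α ∧ |Real.sign r| = 1 := by
      rcases hr0.lt_or_gt with h | h
      · rw [Real.sign_of_neg h]
        rw [abs_of_neg h] at hr
        constructor
        · linarith
        · norm_num
      · rw [Real.sign_of_pos h]
        rw [abs_of_pos h] at hr
        constructor
        · linarith
        · norm_num
    obtain ⟨hs1, hs2⟩ := hs
    obtain ⟨ht0, htα⟩ := ht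
    have hwabs : |t * Real.sign r| = t := by
      rw [abs_mul, hs2, mul_one, abs_of_nonneg ht0]
    have hwle : |t * Real.sign r| ≤ α := by rw [hwabs]; exact htα
    have hr2 : r ^ 2 = α ^ 2 := by
      rw [← sq_abs, hr]
    have hL : 1 / (2 * α) * (r - t * Real.sign r) ^ 2 + mcp α (t * Real.sign r) = α / 2 := by
      rw [mcp_obj α hα r _ hwle, hwabs]
      have : r * (t * Real.sign r) = α * t := by
        rw [show r * (t * Real.sign r) = (r * Real.sign r) * t by ring, hs1]
      rw [this, hr2]
      field_simp
      ring
    rw [hL]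
    by_cases hv' : |v| ≤ α
    · rw [mcp_obj α hα r v hv']
      have h1 : r * v ≤ |r| * |v| := by
        calc r * v ≤ |r * v| := le_abs_self _
          _ = |r| * |v| := abs_mul r v
      rw [hr] at h1
      have h2 : r * v / α ≤ |v| := by
        rw [div_le_iff₀ hα]; nlinarith
      have h3 : r ^ 2 / (2 * α) = α / 2 := by
        rw [hr2]; field_simp
      linarith
    · rw [mcp_obj' α r v hv']
      have h1 : 0 ≤ (r - v) ^ 2 / (2 * α) := by positivity
      linarith
end

section
/- For 0 < β < α, the firm thresholding operator T(r) defined by T(r) = 0 for |r| ≤ β, T(r) = (α/(α−β))(1 − β/|r|)·r for β < |r| ≤ α, and T(r) = r for |r| > α, is Lipschitz continuous on ℝ with Lipschitz constant α/(α−β). -/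
lemma firm_eq (α β : ℝ) (hβ : 0 < β) (hβα : β < α) (r : ℝ) :
    firm α β r = max (min (α/(α-β)*r - α/(α-β)*β) r)
      (min (max (α/(α-β)*r + α/(α-β)*β) r) 0) := by
  have hab : (0:ℝ) < α - β := by linarith
  set c := α/(α-β) with hc
  have hca : c * (α - β) = α := by rw [hc]; field_simp
  have hc1 : 1 < c := by rw [hc, lt_div_iff₀ hab]; linarith
  unfold firm
  rcases le_or_gt r 0 with hr | hr
  · rw [abs_of_nonpos hr]
    split_ifs with h1 h2
    · -- -β ≤ r ≤ 0 : value 0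
      have e1 : min (max (c*r + c*β) r) 0 = 0 :=
        min_eq_right (le_max_of_le_left (by nlinarith))
      rw [e1, max_eq_right (le_trans (min_le_right _ _) hr)]
    · -- -α ≤ r < -β : value c*(r+β)
      have hr0 : r ≠ 0 := by push_neg at h1; intro h; rw [h] at h1; norm_num at h1; linarith
      have hr0' : -r ≠ 0 := neg_ne_zero.mpr hr0
      have lhs : c * (1 - β / -r) * r = c*r + c*β := by field_simp [hr0']; ring
      rw [lhs]
      have e1 : min (c*r - c*β) r = c*r - c*β := min_eq_left (by nlinarith)
      have e2 : max (c*r + c*β) r = c*r + c*β := max_eq_left (by nlinarith)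
      have e3 : min (c*r + c*β) 0 = c*r + c*β := min_eq_left (by nlinarith)
      rw [e1, e2, e3, max_eq_right (by nlinarith)]
    · -- r < -α : value r
      have e1 : min (c*r - c*β) r = c*r - c*β := min_eq_left (by nlinarith)
      have e2 : max (c*r + c*β) r = r := max_eq_right (by nlinarith)
      rw [e1, e2, min_eq_left hr, max_eq_right (by nlinarith)]
  · rw [abs_of_pos hr]
    split_ifs with h1 h2
    · -- 0 < r ≤ β : value 0
      have e1 : min (c*r - c*β) r = c*r - c*β := min_eq_left (by nlinarith)
      have e2 : min (max (c*r + c*β) r) 0 = 0 :=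
        min_eq_right (le_max_of_le_left (by nlinarith))
      rw [e1, e2, max_eq_right (by nlinarith)]
    · -- β < r ≤ α : value c*(r-β)
      have hr0 : r ≠ 0 := ne_of_gt hr
      have lhs : c * (1 - β / r) * r = c*r - c*β := by field_simp
      rw [lhs]
      have e1 : min (c*r - c*β) r = c*r - c*β := min_eq_left (by nlinarith)
      have e2 : min (max (c*r + c*β) r) 0 = 0 :=
        min_eq_right (le_max_of_le_left (by nlinarith))
      rw [e1, e2, max_eq_left (by nlinarith)]
    · -- r > α : value r
      have e1 : min (c*r - c*β) r = r := min_eq_right (by nlinarith)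
      have e2 : min (max (c*r + c*β) r) 0 = 0 :=
        min_eq_right (le_max_of_le_left (by nlinarith))
      rw [e1, e2, max_eq_left (by nlinarith)]

theorem firm_lipschitz (α β : ℝ) (hβ : 0 < β) (hβα : β < α) :
    ∀ r s : ℝ, |firm α β r - firm α β s| ≤ (α / (α - β)) * |r - s| := by
  intro r s
  have hab : (0:ℝ) < α - β := by linarith
  set c := α/(α-β) with hc
  have hc1 : 1 ≤ c := by rw [hc, le_div_iff₀ hab]; linarith
  have hc0 : 0 < c := by linarith
  have key1 : |(c*r - c*β) - (c*s - c*β)| ≤ c * |r - s| := by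
    have : (c*r - c*β) - (c*s - c*β) = c * (r - s) := by ring
    rw [this, abs_mul, abs_of_pos hc0]
  have key2 : |(c*r + c*β) - (c*s + c*β)| ≤ c * |r - s| := by
    have : (c*r + c*β) - (c*s + c*β) = c * (r - s) := by ring
    rw [this, abs_mul, abs_of_pos hc0]
  have key3 : |r - s| ≤ c * |r - s| := le_mul_of_one_le_left (abs_nonneg _) hc1
  rw [firm_eq α β hβ hβα r, firm_eq α β hβ hβα s]
  refine (abs_max_sub_max_le_max _ _ _ _).trans (max_le ?_ ?_)
  · exact (abs_min_sub_min_le_max _ _ _ _).trans (max_le key1 key3)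
  · refine (abs_min_sub_min_le_max _ _ _ _).trans (max_le ?_ ?_)
    · exact (abs_max_sub_max_le_max _ _ _ _).trans (max_le key2 key3)
    · simpa using mul_nonneg hc0.le (abs_nonneg (r - s))
end

section
/- Let 0 < γξ² < α and r_l ∈ ℝ^p. Then the minimizer of w ↦ (1/(2ξ²))‖r_l − w‖₂² + γ ρ_α(‖w‖₂) over ℝ^p is: 0 if ‖r_l‖₂ ≤ γξ²; (α/(α−γξ²))(1 − γξ²/‖r_l‖₂)·r_l if γξ² < ‖r_l‖₂ ≤ α; and r_l if ‖r_l‖₂ > α. -/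
/-- The proximal map of `κ · mcp α` restricted to `[0, ∞)` (firm thresholding). -/
noncomputable def firmThreshold (α κ s : ℝ) : ℝ :=
  if s ≤ κ then 0 else if s ≤ α then α * (s - κ) / (α - κ) else s

noncomputable def scalarMCPObjective (α κ s t : ℝ) : ℝ :=
  (s - t) ^ 2 / 2 + κ * mcp α t

noncomputable def groupMCPObjective {E : Type*} [SeminormedAddCommGroup E] (α κ : ℝ) (r w : E) :
    ℝ :=
  ‖r - w‖ ^ 2 / 2 + κ * mcp α ‖w‖

section Scalar

variable {α κ s t : ℝ}

lemma two_mul_mul_scalarMCPObjective_of_le (ht : 0 ≤ t) (htα : t ≤ α) :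
    2 * α * scalarMCPObjective α κ s t = α * (s - t) ^ 2 + κ * (2 * α * t - t ^ 2) := by
  rcases (ht.trans htα).eq_or_lt with rfl | hα
  · simp [le_antisymm htα ht]
  · rw [scalarMCPObjective, mcp, abs_of_nonneg ht, if_pos htα]
    field_simp

lemma two_mul_scalarMCPObjective_of_lt (hαt : α < t) :
    2 * scalarMCPObjective α κ s t = (s - t) ^ 2 + κ * α := by
  rw [scalarMCPObjective, mcp, if_neg (not_le.mpr (hαt.trans_le (le_abs_self t)))]
  ring

lemma scalarMCPObjective_zero_lt (hκ : 0 < κ) (hκα : κ < α) (hs : 0 ≤ s) (hsκ : s ≤ κ)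
    (ht : 0 < t) :
    scalarMCPObjective α κ s 0 < scalarMCPObjective α κ s t := by
  have hα : 0 < α := hκ.trans hκα
  have hc0 := two_mul_mul_scalarMCPObjective_of_le (κ := κ) (s := s) le_rfl hα.le
  rcases le_or_gt t α with htα | hαt
  · have hct := two_mul_mul_scalarMCPObjective_of_le (κ := κ) (s := s) ht.le htα
    nlinarith [mul_pos (mul_pos (sub_pos.2 hκα) ht) ht,
      mul_nonneg (mul_nonneg hα.le ht.le) (sub_nonneg.2 hsκ)]
  · have hct := two_mul_scalarMCPObjective_of_lt (κ := κ) (s := s) hαt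
    nlinarith [mul_le_mul_of_nonneg_left hsκ hs, mul_le_mul_of_nonneg_left hsκ hκ.le,
      mul_lt_mul_of_pos_left hκα hκ, sq_nonneg (s - t)]

lemma scalarMCPObjective_shrink_lt (hκ : 0 < κ) (hκs : κ < s) (hsα : s ≤ α) (ht : 0 ≤ t)
    (hne : t ≠ α * (s - κ) / (α - κ)) :
    scalarMCPObjective α κ s (α * (s - κ) / (α - κ)) < scalarMCPObjective α κ s t := by
  have hα : 0 < α := hκ.trans (hκs.trans_le hsα)
  have hακ : 0 < α - κ := by linarith
  set T := α * (s - κ) / (α - κ)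
  have hT : T * (α - κ) = α * (s - κ) := div_mul_cancel₀ _ hακ.ne'
  have hT0 : 0 ≤ T := div_nonneg (by nlinarith) hακ.le
  have hTα : T ≤ α := by rw [div_le_iff₀ hακ]; nlinarith
  have hcT := two_mul_mul_scalarMCPObjective_of_le (κ := κ) (s := s) hT0 hTα
  rcases le_or_gt t α with htα | hαt
  · have hct := two_mul_mul_scalarMCPObjective_of_le (κ := κ) (s := s) ht htα
    have hsq := mul_pos hακ (pow_two_pos_of_ne_zero (sub_ne_zero.2 hne))
    nlinarith
  · have hcα := two_mul_mul_scalarMCPObjective_of_le (κ := κ) (s := s) hα.le le_rfl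
    have hct := two_mul_scalarMCPObjective_of_lt (κ := κ) (s := s) hαt
    nlinarith [mul_nonneg hακ.le (sq_nonneg (α - T)), mul_pos hα (sub_pos.2 hαt),
      mul_pos (mul_pos hα (sub_pos.2 hαt)) (show 0 < t + α - 2 * s by linarith)]

lemma scalarMCPObjective_self_lt (hκ : 0 < κ) (hκα : κ < α) (hαs : α < s) (ht : 0 ≤ t)
    (hne : t ≠ s) :
    scalarMCPObjective α κ s s < scalarMCPObjective α κ s t := by
  have hcs := two_mul_scalarMCPObjective_of_lt (κ := κ) (s := s) hαs
  rcases le_or_gt t α with htα | hαt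
  · have hct := two_mul_mul_scalarMCPObjective_of_le (κ := κ) (s := s) ht htα
    have hgap : (α - t) ^ 2 < (s - t) ^ 2 := by nlinarith
    nlinarith [mul_lt_mul_of_pos_left hgap (hκ.trans hκα),
      mul_le_mul_of_nonneg_right hκα.le (sq_nonneg (α - t))]
  · have hct := two_mul_scalarMCPObjective_of_lt (κ := κ) (s := s) hαt
    nlinarith [pow_two_pos_of_ne_zero (sub_ne_zero.2 hne)]

lemma firmThreshold_nonneg (hκ : 0 < κ) (hκα : κ < α) (hs : 0 ≤ s) :
    0 ≤ firmThreshold α κ s := by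
  unfold firmThreshold
  split_ifs with hsκ
  · exact le_rfl
  · exact div_nonneg (mul_nonneg (hκ.trans hκα).le (by linarith)) (by linarith)
  · exact hs

lemma firmThreshold_le (hκ : 0 < κ) (hκα : κ < α) (hs : 0 ≤ s) : firmThreshold α κ s ≤ s := by
  unfold firmThreshold
  split_ifs with hsκ hsα
  · exact hs
  · rw [div_le_iff₀ (by linarith)]
    nlinarith
  · exact le_rfl

theorem scalarMCPObjective_firmThreshold_lt (hκ : 0 < κ) (hκα : κ < α) (hs : 0 ≤ s)
    (ht : 0 ≤ t) (hne : t ≠ firmThreshold α κ s) :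
    scalarMCPObjective α κ s (firmThreshold α κ s) < scalarMCPObjective α κ s t := by
  unfold firmThreshold at hne ⊢
  split_ifs at hne ⊢ with hsκ hsα
  · exact scalarMCPObjective_zero_lt hκ hκα hs hsκ (ht.lt_of_ne' hne)
  · exact scalarMCPObjective_shrink_lt hκ (not_le.mp hsκ) hsα ht hne
  · exact scalarMCPObjective_self_lt hκ hκα (not_le.mp hsα) ht hne

theorem scalarMCPObjective_firmThreshold_le (hκ : 0 < κ) (hκα : κ < α) (hs : 0 ≤ s)
    (ht : 0 ≤ t) :
    scalarMCPObjective α κ s (firmThreshold α κ s) ≤ scalarMCPObjective α κ s t := by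
  rcases eq_or_ne t (firmThreshold α κ s) with rfl | hne
  · exact le_rfl
  · exact (scalarMCPObjective_firmThreshold_lt hκ hκα hs ht hne).le

end Scalar

lemma scalarMCPObjective_norm_le {E : Type*} [SeminormedAddCommGroup E] (α κ : ℝ) (r w : E) :
    scalarMCPObjective α κ ‖r‖ ‖w‖ ≤ groupMCPObjective α κ r w := by
  have h : (‖r‖ - ‖w‖) ^ 2 ≤ ‖r - w‖ ^ 2 := sq_le_sq.mpr <| by
    simpa [abs_of_nonneg (norm_nonneg (r - w))] using abs_norm_sub_norm_le r w
  unfold scalarMCPObjective groupMCPObjective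
  linarith

section StrictConvex

variable {E : Type*} [NormedAddCommGroup E] [NormedSpace ℝ E]

lemma norm_div_norm_smul_and_norm_sub {r : E} {t : ℝ} (ht : 0 ≤ t) (htr : t ≤ ‖r‖) :
    ‖(t / ‖r‖) • r‖ = t ∧ ‖r - (t / ‖r‖) • r‖ = ‖r‖ - t := by
  have hcancel : t / ‖r‖ * ‖r‖ = t := div_mul_cancel_of_imp fun h => le_antisymm (h ▸ htr) ht
  have hc1 : t / ‖r‖ ≤ 1 := div_le_one_of_le₀ htr (norm_nonneg r)
  constructor
  · rw [norm_smul, Real.norm_of_nonneg (div_nonneg ht (norm_nonneg r)), hcancel]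
  · rw [show r - (t / ‖r‖) • r = (1 - t / ‖r‖) • r by rw [sub_smul, one_smul], norm_smul,
      Real.norm_of_nonneg (sub_nonneg.2 hc1), sub_mul, one_mul, hcancel]

lemma eq_norm_div_norm_smul_of_norm_sub_eq [StrictConvexSpace ℝ E] {r w : E}
    (h : ‖r - w‖ = ‖r‖ - ‖w‖) : w = (‖w‖ / ‖r‖) • r := by
  rcases eq_or_ne r 0 with rfl | hr
  · simpa [eq_neg_iff_add_eq_zero, ← two_mul] using h
  · have hray : SameRay ℝ r w :=
      sameRay_iff_norm_sub.mpr (h.trans (abs_of_nonneg (h ▸ norm_nonneg (r - w))).symm)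
    rw [div_eq_inv_mul, mul_smul, ← sameRay_iff_norm_smul_eq.mp hray,
      inv_smul_smul₀ (norm_ne_zero_iff.mpr hr)]

theorem setOf_forall_groupMCPObjective_le [StrictConvexSpace ℝ E] {α κ : ℝ} (hκ : 0 < κ)
    (hκα : κ < α) (r : E) :
    {w | ∀ v, groupMCPObjective α κ r w ≤ groupMCPObjective α κ r v} =
      {(firmThreshold α κ ‖r‖ / ‖r‖) • r} := by
  set t := firmThreshold α κ ‖r‖
  have ht0 : 0 ≤ t := firmThreshold_nonneg hκ hκα (norm_nonneg r)
  have htr : t ≤ ‖r‖ := firmThreshold_le hκ hκα (norm_nonneg r)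
  obtain ⟨hnorm, hnorm_sub⟩ := norm_div_norm_smul_and_norm_sub ht0 htr
  have hval : groupMCPObjective α κ r ((t / ‖r‖) • r) = scalarMCPObjective α κ ‖r‖ t := by
    rw [groupMCPObjective, hnorm, hnorm_sub, scalarMCPObjective]
  ext w
  refine ⟨fun hw => ?_, ?_⟩
  · have hle : scalarMCPObjective α κ ‖r‖ ‖w‖ ≤ scalarMCPObjective α κ ‖r‖ t :=
      (scalarMCPObjective_norm_le α κ r w).trans ((hw _).trans hval.le)
    have hwt : ‖w‖ = t := by
      by_contra hne
      exact hle.not_gt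
        (scalarMCPObjective_firmThreshold_lt hκ hκα (norm_nonneg r) (norm_nonneg w) hne)
    have heq : groupMCPObjective α κ r w = scalarMCPObjective α κ ‖r‖ ‖w‖ :=
      le_antisymm (hwt ▸ (hw _).trans hval.le) (scalarMCPObjective_norm_le α κ r w)
    have hsub : ‖r - w‖ = ‖r‖ - ‖w‖ := by
      rw [← sq_eq_sq₀ (norm_nonneg _) (by linarith)]
      unfold groupMCPObjective scalarMCPObjective at heq
      linarith
    rw [Set.mem_singleton_iff, eq_norm_div_norm_smul_of_norm_sub_eq hsub, hwt]
  · rintro rfl v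
    exact hval.trans_le <|
      (scalarMCPObjective_firmThreshold_le hκ hκα (norm_nonneg r) (norm_nonneg v)).trans
        (scalarMCPObjective_norm_le α κ r v)

end StrictConvex

theorem prox_group_mcp (α γ ξ : ℝ) (hγ : 0 < γ) (hξ : 0 < ξ)
    (h : γ * ξ ^ 2 < α) (p : ℕ) (r : EuclideanSpace ℝ (Fin p)) :
    {w : EuclideanSpace ℝ (Fin p) | ∀ v : EuclideanSpace ℝ (Fin p),
        1 / (2 * ξ ^ 2) * ‖r - w‖ ^ 2 + γ * mcp α ‖w‖ ≤
        1 / (2 * ξ ^ 2) * ‖r - v‖ ^ 2 + γ * mcp α ‖v‖} =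
      {if ‖r‖ ≤ γ * ξ ^ 2 then 0
       else if ‖r‖ ≤ α then ((α / (α - γ * ξ ^ 2)) * (1 - γ * ξ ^ 2 / ‖r‖)) • r
       else r} := by
  have hκ : 0 < γ * ξ ^ 2 := by positivity
  have hscale : ∀ w : EuclideanSpace ℝ (Fin p),
      1 / (2 * ξ ^ 2) * ‖r - w‖ ^ 2 + γ * mcp α ‖w‖ =
        groupMCPObjective α (γ * ξ ^ 2) r w / ξ ^ 2 := by
    intro w
    unfold groupMCPObjective
    field_simp
  simp_rw [hscale, div_le_div_iff_of_pos_right (pow_pos hξ 2)]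
  rw [setOf_forall_groupMCPObjective_le hκ h r]
  congr 1
  unfold firmThreshold
  split_ifs with hsκ hsα
  · simp
  · have hr : ‖r‖ ≠ 0 := by linarith
    have hακ : α - γ * ξ ^ 2 ≠ 0 := by linarith
    congr 1
    field_simp
  · rw [div_self (by linarith), one_smul]
end
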